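/- Let w ∈ S_n be a fully commutative permutation with Row₂(P(w)) = {z₁ < z₂ < ⋯ < z_t}, and for each i let b_i be the value that bumps z_i from the first row to the second row during the RSK insertion of w. Then: (a) z₁ z₂ ⋯ z_t is an increasing subsequence of the one-line notation of w (the values z₁, …, z_t occur from left to right); (b) the sets {z₁,…,z_t} and {b₁,…,b_t} are disjoint; (c) b₁ b₂ ⋯ b_t is an increasing subsequence of w (so b₁ < b₂ < ⋯ < b_t and they occur from left to right); (d) for 1 ≤ i < j ≤ t, the value z_i is bumped before z_j during the insertion. -/

import Mathlib

/-- The value in position `j` (0-indexed) of the one-line notation of `w`,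
extended by the identity outside the range `[0, n)`. -/
def entry {n : ℕ} (w : Equiv.Perm (Fin n)) (j : ℕ) : ℕ :=
  if h : j < n then (w ⟨j, h⟩ : ℕ) else j

/-- One-line notation of a permutation, as a list of natural numbers (0-indexed values). -/
def oneLine {n : ℕ} (w : Equiv.Perm (Fin n)) : List ℕ :=
  List.ofFn (fun i => (w i : ℕ))

/-- A permutation is fully commutative iff it avoids the pattern 321. -/
def FullyCommutative {n : ℕ} (w : Equiv.Perm (Fin n)) : Prop :=
  ¬ ∃ i j k : Fin n, i < j ∧ j < k ∧ w k < w j ∧ w j < w i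

/-- A permutation is boolean iff it avoids the patterns 321 and 3412. -/
def BooleanPerm {n : ℕ} (w : Equiv.Perm (Fin n)) : Prop :=
  FullyCommutative w ∧
    ¬ ∃ i j k l : Fin n, i < j ∧ j < k ∧ k < l ∧
        w k < w l ∧ w l < w i ∧ w i < w j

/-- The Coxeter length of a permutation: its number of inversions. -/
def invCount {n : ℕ} (w : Equiv.Perm (Fin n)) : ℕ :=
  (Finset.univ.filter fun p : Fin n × Fin n => p.1 < p.2 ∧ w p.2 < w p.1).card

/-- The support of `w`: the set of (0-indexed) indices `i` such that the simple
transposition `s_i` appears in some (equivalently, every) reduced word of `w`;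
equivalently, `{w(0),…,w(i)} ≠ {0,…,i}`, i.e. `max {w(j) : j ≤ i} > i`. -/
def Supp {n : ℕ} (w : Equiv.Perm (Fin n)) : Set ℕ :=
  {i | ∃ j : Fin n, (j : ℕ) ≤ i ∧ i < (w j : ℕ)}

/-- The simple transposition `s_i`, swapping positions `i` and `i+1` (0-indexed). -/
def simpleTr {n : ℕ} (i : ℕ) (h : i + 1 < n) : Equiv.Perm (Fin n) :=
  Equiv.swap ⟨i, by omega⟩ ⟨i + 1, h⟩

/-- Schensted row insertion of a value into a tableau (a list of rows). -/
def rowInsert : List (List ℕ) → ℕ → List (List ℕ)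
  | [], x => [[x]]
  | r :: rest, x =>
    match r.find? (fun y => decide (x < y)) with
    | none => (r ++ [x]) :: rest
    | some y => (r.map fun z => if z = y then x else z) :: rowInsert rest y

/-- RSK insertion tableau of a list. -/
def RSKList (l : List ℕ) : List (List ℕ) := l.foldl rowInsert []

/-- RSK insertion tableau `P(w)` of a permutation. -/
def RSKP {n : ℕ} (w : Equiv.Perm (Fin n)) : List (List ℕ) := RSKList (oneLine w)

/-- RSK recording tableau `Q(w) = P(w⁻¹)`. -/
def RSKQ {n : ℕ} (w : Equiv.Perm (Fin n)) : List (List ℕ) := RSKP w⁻¹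

/-- The set of entries in the first row of a tableau. -/
def Row1 (T : List (List ℕ)) : Finset ℕ := (T.getD 0 []).toFinset

/-- The set of entries in the second row of a tableau. -/
def Row2 (T : List (List ℕ)) : Finset ℕ := (T.getD 1 []).toFinset

/-- `BumpsAt l k z` : during the RSK insertion of the list `l`, the insertion of
the `(k+1)`-st letter of `l` bumps the value `z` from the first row to the
second row (`z` is the smallest first-row entry larger than the inserted letter). -/
def BumpsAt (l : List ℕ) (k : ℕ) (z : ℕ) : Prop :=
  k < l.length ∧
    ((RSKList (l.take k)).getD 0 []).find? (fun y => decide (l.getD k 0 < y)) = some z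

/-- `Bumps l b z` : during the RSK insertion of `l`, the value `b` bumps the
value `z` from the first row to the second row. -/
def Bumps (l : List ℕ) (b z : ℕ) : Prop :=
  ∃ k, l.getD k 0 = b ∧ BumpsAt l k z

/-- A finite set of naturals is crowded if some integer interval `[y, y+2x]`
(with `x > 0`) contains more than `x+1` of its elements. -/
def CrowdedSet (L : Finset ℕ) : Prop :=
  ∃ x y : ℤ, 0 < x ∧
    x + 1 < ((L.filter fun a : ℕ => y ≤ (a : ℤ) ∧ (a : ℤ) ≤ y + 2 * x).card : ℤ)

/-- A fully commutative permutation is crowded if the second row of its RSK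
insertion tableau is a crowded set. -/
def CrowdedPerm {n : ℕ} (w : Equiv.Perm (Fin n)) : Prop :=
  CrowdedSet (Row2 (RSKP w))

/-- Covering relation of the right weak order. -/
def RWCovers {n : ℕ} (u v : Equiv.Perm (Fin n)) : Prop :=
  ∃ i, ∃ h : i + 1 < n, v = u * simpleTr i h ∧ invCount v = invCount u + 1

/-- The right weak order on `S_n`. -/
def RightWeakLE {n : ℕ} : Equiv.Perm (Fin n) → Equiv.Perm (Fin n) → Prop :=
  Relation.ReflTransGen RWCovers

/-- Covering relation of the left weak order. -/
def LWCovers {n : ℕ} (u v : Equiv.Perm (Fin n)) : Prop :=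
  ∃ i, ∃ h : i + 1 < n, v = simpleTr i h * u ∧ invCount v = invCount u + 1

/-- The left weak order on `S_n`. -/
def LeftWeakLE {n : ℕ} : Equiv.Perm (Fin n) → Equiv.Perm (Fin n) → Prop :=
  Relation.ReflTransGen LWCovers

/-- A minimal crowded permutation: a crowded fully commutative permutation all of
whose strict predecessors (among fully commutative permutations) in the right
weak order are uncrowded. -/
def MinimalCrowded {n : ℕ} (w : Equiv.Perm (Fin n)) : Prop :=
  FullyCommutative w ∧ CrowdedPerm w ∧
    ∀ v : Equiv.Perm (Fin n), FullyCommutative v → RightWeakLE v w → v ≠ w →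
      ¬ CrowdedPerm v

/-- `l` is an increasing subsequence of the one-line notation of `w`. -/
def IncreasingSubseq {n : ℕ} (w : Equiv.Perm (Fin n)) (l : List ℕ) : Prop :=
  l.Sublist (oneLine w) ∧ l.Pairwise (· < ·)

/-- The length of a longest increasing subsequence of `w`. -/
noncomputable def lisLen {n : ℕ} (w : Equiv.Perm (Fin n)) : ℕ :=
  sSup {k | ∃ l : List ℕ, IncreasingSubseq w l ∧ l.length = k}

/-- A consecutive occurrence of the pattern 415263 starting at (0-indexed) position `i`. -/
def Consec415263 {n : ℕ} (w : Equiv.Perm (Fin n)) (i : ℕ) : Prop :=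
  i + 5 < n ∧
    entry w (i + 1) < entry w (i + 3) ∧ entry w (i + 3) < entry w (i + 5) ∧
    entry w (i + 5) < entry w i ∧ entry w i < entry w (i + 2) ∧
    entry w (i + 2) < entry w (i + 4)

/-- A consecutive occurrence of the pattern 315264 starting at (0-indexed) position `i`. -/
def Consec315264 {n : ℕ} (w : Equiv.Perm (Fin n)) (i : ℕ) : Prop :=
  i + 5 < n ∧
    entry w (i + 1) < entry w (i + 3) ∧ entry w (i + 3) < entry w i ∧
    entry w i < entry w (i + 5) ∧ entry w (i + 5) < entry w (i + 2) ∧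
    entry w (i + 2) < entry w (i + 4)

/-- An occurrence (not necessarily consecutive) of the pattern 415263 in `w`,
at positions `p 0 < p 1 < ⋯ < p 5`. -/
def Occ415263 {n : ℕ} (w : Equiv.Perm (Fin n)) (p : Fin 6 → Fin n) : Prop :=
  StrictMono p ∧
    w (p 1) < w (p 3) ∧ w (p 3) < w (p 5) ∧ w (p 5) < w (p 0) ∧
    w (p 0) < w (p 2) ∧ w (p 2) < w (p 4)
/-!
Throughout the insertion the first row consists of the letters read so far that have not yet
been bumped, in increasing order; lower rows never influence it. Avoiding 321 forces values to
be bumped in increasing order: if `z'` is bumped (by `x'`) before `z` is bumped (by `x`) but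
`z < z'`, then either `z'` precedes `z` in `w`, and `z' z x` is a 321 pattern, or `z` already
sits in the first row when `z'` is bumped, so `x' > z` by minimality of `z'` and `z' x' x` is a
321 pattern. With bump times monotone in the bumped values, the patterns `z_j z_i b_i` and
`z_i b_i b_j` yield the remaining claims.
-/

def bumpRow (r : List ℕ) (x : ℕ) : List ℕ :=
  match r.find? (x < ·) with
  | none => r ++ [x]
  | some y => r.map fun z => if z = y then x else z

theorem getD_zero_rowInsert (T : List (List ℕ)) (x : ℕ) :
    (rowInsert T x).getD 0 [] = bumpRow (T.getD 0 []) x := by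
  cases T with
  | nil => rfl
  | cons r rest =>
    simp only [rowInsert, bumpRow, List.getD_cons_zero]
    split <;> rfl

theorem mem_bumpRow {r : List ℕ} {x v : ℕ} :
    v ∈ bumpRow r x ↔ (v ∈ r ∧ r.find? (x < ·) ≠ some v) ∨ v = x := by
  unfold bumpRow
  split
  case h_1 h => simp [h]
  case h_2 y h =>
    have hy := List.mem_of_find?_eq_some h
    simp only [List.mem_map, h, ne_eq, Option.some.injEq]
    constructor
    · rintro ⟨u, hu, rfl⟩
      split_ifs with huy
      · exact Or.inr rfl
      · exact Or.inl ⟨hu, Ne.symm huy⟩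
    · rintro (⟨hv, hyv⟩ | rfl)
      · exact ⟨v, hv, if_neg (Ne.symm hyv)⟩
      · exact ⟨y, hy, if_pos rfl⟩

theorem List.Pairwise.le_of_find?_eq_some {r : List ℕ} (hr : r.Pairwise (· < ·)) {x y c : ℕ}
    (hy : r.find? (x < ·) = some y) (hc : c ∈ r) (hxc : x < c) : y ≤ c := by
  obtain ⟨-, as, bs, rfl, has⟩ := List.find?_eq_some_iff_append.1 hy
  rcases List.mem_append.1 hc with hc | hc
  · simpa [hxc] using has c hc
  · rcases List.mem_cons.1 hc with rfl | hc
    · exact le_rfl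
    · exact (List.rel_of_pairwise_cons (List.pairwise_append.1 hr).2.1 hc).le

theorem pairwise_bumpRow {r : List ℕ} {x : ℕ} (hr : r.Pairwise (· < ·)) (hx : x ∉ r) :
    (bumpRow r x).Pairwise (· < ·) := by
  have below : ∀ a ∈ r, ¬ x < a → a < x := fun a ha hxa =>
    lt_of_le_of_ne (not_lt.1 hxa) (ne_of_mem_of_not_mem ha hx)
  unfold bumpRow
  split
  case h_1 h =>
    refine List.pairwise_append.2 ⟨hr, List.pairwise_singleton _ _, ?_⟩
    simp only [List.mem_singleton, forall_eq]
    exact fun a ha => below a ha (by simpa using List.find?_eq_none.1 h a ha)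
  case h_2 y h =>
    obtain ⟨hxy, as, bs, rfl, has⟩ := List.find?_eq_some_iff_append.1 h
    simp only [decide_eq_true_eq] at hxy
    obtain ⟨has', hbs, -⟩ := List.pairwise_append.1 hr
    have has_lt : ∀ a ∈ as, a < x := fun a ha =>
      below a (List.mem_append_left _ ha) (by simpa using has a ha)
    have hbs_gt : ∀ c ∈ bs, y < c := fun c hc => List.rel_of_pairwise_cons hbs hc
    have hfix : ∀ l : List ℕ, (∀ a ∈ l, a ≠ y) →
        l.map (fun z => if z = y then x else z) = l :=
      fun l hl => (List.map_congr_left fun a ha => if_neg (hl a ha)).trans l.map_id'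
    have hmap : (as ++ y :: bs).map (fun z => if z = y then x else z) = as ++ x :: bs := by
      rw [List.map_append, List.map_cons, if_pos rfl,
        hfix as fun a ha => ((has_lt a ha).trans hxy).ne,
        hfix bs fun c hc => (hbs_gt c hc).ne']
    rw [hmap]
    refine List.pairwise_append.2 ⟨has', List.pairwise_cons.2 ⟨?_, hbs.of_cons⟩, ?_⟩
    · exact fun c hc => hxy.trans (hbs_gt c hc)
    · intro a ha c hc
      rcases List.mem_cons.1 hc with rfl | hc
      · exact has_lt a ha
      · exact (has_lt a ha).trans (hxy.trans (hbs_gt c hc))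

def firstRow (l : List ℕ) (k : ℕ) : List ℕ := (RSKList (l.take k)).getD 0 []

theorem firstRow_zero (l : List ℕ) : firstRow l 0 = [] := rfl

theorem firstRow_succ {l : List ℕ} {k : ℕ} (hk : k < l.length) :
    firstRow l (k + 1) = bumpRow (firstRow l k) (l.getD k 0) := by
  rw [firstRow, firstRow, ← getD_zero_rowInsert, List.take_add_one, List.getElem?_eq_getElem hk,
    List.getD_eq_getElem _ _ hk, RSKList, RSKList, Option.toList_some, List.foldl_append]
  rfl

theorem firstRow_succ_of_length_le {l : List ℕ} {k : ℕ} (hk : l.length ≤ k) :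
    firstRow l (k + 1) = firstRow l k := by
  rw [firstRow, firstRow, List.take_of_length_le hk, List.take_of_length_le (by omega)]

theorem List.mem_take_succ_iff {α : Type*} {l : List α} {k : ℕ} {v d : α}
    (hk : k < l.length) : v ∈ l.take (k + 1) ↔ v ∈ l.take k ∨ v = l.getD k d := by
  rw [List.take_add_one, List.getElem?_eq_getElem hk, List.getD_eq_getElem _ _ hk,
    Option.toList_some, List.mem_append, List.mem_singleton]

theorem List.getD_notMem_take {α : Type*} {l : List α} (hl : l.Nodup) {k : ℕ} {d : α}
    (hk : k < l.length) : l.getD k d ∉ l.take k := by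
  rw [List.mem_take_iff_getElem]
  rintro ⟨j, hj, hjk⟩
  rw [← List.getD_eq_getElem _ d, List.getD_inj (by omega) hk hl] at hjk
  omega

theorem mem_take_of_mem_firstRow {l : List ℕ} {k v : ℕ} (hv : v ∈ firstRow l k) :
    v ∈ l.take k := by
  induction k generalizing v with
  | zero => simp [firstRow_zero] at hv
  | succ k ih =>
    by_cases hk : k < l.length
    · rw [firstRow_succ hk, mem_bumpRow] at hv
      rw [List.mem_take_succ_iff (d := 0) hk]
      exact hv.imp (fun h => ih h.1) id
    · rw [firstRow_succ_of_length_le (by omega)] at hv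
      exact List.take_subset_take_left l (by omega) (ih hv)

namespace BumpsAt

variable {l : List ℕ} {k z : ℕ}

theorem mem_firstRow (h : BumpsAt l k z) : z ∈ firstRow l k :=
  List.mem_of_find?_eq_some h.2

theorem getD_lt (h : BumpsAt l k z) : l.getD k 0 < z := by
  simpa using List.find?_some h.2

theorem unique {z' : ℕ} (h : BumpsAt l k z) (h' : BumpsAt l k z') : z = z' :=
  Option.some.inj (h.2.symm.trans h'.2)

theorem exists_lt_getD_eq (h : BumpsAt l k z) : ∃ p < k, l.getD p 0 = z := by
  obtain ⟨p, hp, rfl⟩ := List.mem_take_iff_getElem.1 (mem_take_of_mem_firstRow h.mem_firstRow)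
  exact ⟨p, by omega, List.getD_eq_getElem _ _ _⟩

end BumpsAt

theorem getD_notMem_firstRow {l : List ℕ} (hl : l.Nodup) {k : ℕ} (hk : k < l.length) :
    l.getD k 0 ∉ firstRow l k := fun h =>
  List.getD_notMem_take hl hk (mem_take_of_mem_firstRow h)

theorem not_bumpsAt_getD {l : List ℕ} (hl : l.Nodup) {k m : ℕ} (hk : k < l.length)
    (hmk : m ≤ k) : ¬ BumpsAt l m (l.getD k 0) := fun hb =>
  List.getD_notMem_take hl hk
    (List.take_subset_take_left l hmk (mem_take_of_mem_firstRow hb.mem_firstRow))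

theorem mem_firstRow_iff {l : List ℕ} (hl : l.Nodup) {k v : ℕ} :
    v ∈ firstRow l k ↔ v ∈ l.take k ∧ ∀ m < k, ¬ BumpsAt l m v := by
  induction k generalizing v with
  | zero => simp [firstRow_zero]
  | succ k ih =>
    rw [Nat.forall_lt_succ_right]
    by_cases hk : k < l.length
    · have hbk : BumpsAt l k v ↔ (firstRow l k).find? (l.getD k 0 < ·) = some v :=
        and_iff_right hk
      rw [firstRow_succ hk, mem_bumpRow, ih, List.mem_take_succ_iff (d := 0) hk, hbk]
      rcases eq_or_ne v (l.getD k 0) with rfl | hvx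
      · simp only [or_true, true_and]
        exact iff_of_true trivial ⟨fun m hm => not_bumpsAt_getD hl hk hm.le,
          fun h => not_bumpsAt_getD hl hk le_rfl (hbk.2 h)⟩
      · simp only [hvx, or_false, and_assoc]
    · rw [firstRow_succ_of_length_le (by omega), ih, List.take_of_length_le (by omega),
        List.take_of_length_le (by omega)]
      simp only [show ¬ BumpsAt l k v from fun hb => hk hb.1, not_false_eq_true, and_true]

theorem pairwise_firstRow {l : List ℕ} (hl : l.Nodup) (k : ℕ) :
    (firstRow l k).Pairwise (· < ·) := by
  induction k with
  | zero => exact List.Pairwise.nil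
  | succ k ih =>
    by_cases hk : k < l.length
    · rw [firstRow_succ hk]
      exact pairwise_bumpRow ih (getD_notMem_firstRow hl hk)
    · rwa [firstRow_succ_of_length_le (by omega)]

def Avoids321 (l : List ℕ) : Prop :=
  ∀ ⦃p q r : ℕ⦄, p < q → q < r → r < l.length →
    ¬ (l.getD r 0 < l.getD q 0 ∧ l.getD q 0 < l.getD p 0)

namespace BumpsAt

variable {l : List ℕ} {k z : ℕ}

theorem le_of_mem_firstRow (hl : l.Nodup) (h : BumpsAt l k z) {c : ℕ}
    (hc : c ∈ firstRow l k) (hlt : l.getD k 0 < c) : z ≤ c :=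
  (pairwise_firstRow hl k).le_of_find?_eq_some h.2 hc hlt

theorem lt_of_lt (hl : l.Nodup) (h321 : Avoids321 l) {m z' : ℕ} (hm : BumpsAt l m z')
    (hk : BumpsAt l k z) (hmk : m < k) : z' < z := by
  obtain ⟨-, hz_stays⟩ := (mem_firstRow_iff hl).1 hk.mem_firstRow
  have hne : z' ≠ z := fun h => hz_stays m hmk (h ▸ hm)
  obtain ⟨q, hqm, hq⟩ := hm.exists_lt_getD_eq
  obtain ⟨p, hpk, hp⟩ := hk.exists_lt_getD_eq
  have hkl := hk.1
  by_contra! hzz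
  replace hzz : z < z' := lt_of_le_of_ne hzz hne.symm
  rcases lt_or_ge p m with hpm | hmp
  · have hzm : z ∈ firstRow l m := (mem_firstRow_iff hl).2
      ⟨List.mem_take_iff_getElem.2 ⟨p, by omega, by rw [← List.getD_eq_getElem _ 0, hp]⟩,
        fun m' hm' => hz_stays m' (hm'.trans hmk)⟩
    have hz_lt : z < l.getD m 0 := by
      refine lt_of_le_of_ne (not_lt.1 fun h => ?_) fun h => ?_
      · exact (hm.le_of_mem_firstRow hl hzm h).not_gt hzz
      · exact getD_notMem_firstRow hl hm.1 (h ▸ hzm)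
    exact h321 hqm hmk hk.1 ⟨hk.getD_lt.trans hz_lt, hq ▸ hm.getD_lt⟩
  · exact h321 (hqm.trans_le hmp) hpk hk.1 ⟨hp ▸ hk.getD_lt, hp ▸ hq ▸ hzz⟩

theorem lt_iff_lt (hl : l.Nodup) (h321 : Avoids321 l) {m z' : ℕ} (hm : BumpsAt l m z)
    (hk : BumpsAt l k z') : z < z' ↔ m < k := by
  refine ⟨fun hzz => ?_, hm.lt_of_lt hl h321 hk⟩
  rcases lt_trichotomy m k with hmk | rfl | hkm
  · exact hmk
  · exact absurd (hm.unique hk) hzz.ne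
  · exact absurd (hk.lt_of_lt hl h321 hm hkm) hzz.not_gt

theorem lt_of_getD_lt_getD (h321 : Avoids321 l) (hk : BumpsAt l k z) {p q : ℕ}
    (hp : l.getD p 0 = z) (hpk : p < k) (hpq : l.getD p 0 < l.getD q 0) : p < q := by
  by_contra! hqp
  rcases hqp.lt_or_eq with hqp | rfl
  · exact h321 hqp hpk hk.1 ⟨hp ▸ hk.getD_lt, hpq⟩
  · exact hpq.false

theorem getD_lt_getD_of_lt (hl : l.Nodup) (h321 : Avoids321 l) (hk : BumpsAt l k z) {m : ℕ}
    (hkm : k < m) (hm : m < l.length) : l.getD k 0 < l.getD m 0 := by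
  obtain ⟨p, hpk, hp⟩ := hk.exists_lt_getD_eq
  refine lt_of_le_of_ne (not_lt.1 fun hmk => h321 hpk hkm hm ⟨hmk, hp ▸ hk.getD_lt⟩) ?_
  rw [Ne, List.getD_inj hk.1 hm hl]
  exact hkm.ne

end BumpsAt

theorem List.ofFn_sublist_of_strictMono {α : Type*} {l : List α} {t : ℕ} {d : α}
    {f : Fin t → α} {P : Fin t → ℕ} (hP : StrictMono P) (hlt : ∀ i, P i < l.length)
    (hf : ∀ i, l.getD (P i) d = f i) : (List.ofFn f).Sublist l := by
  have h := List.map_getElem_sublist (l := l)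
    (is := List.ofFn fun i => (⟨P i, hlt i⟩ : Fin l.length))
    (List.pairwise_ofFn.2 fun _ _ hij => hP hij)
  rwa [List.map_ofFn, show ((fun i : Fin l.length => l[i]) ∘ fun i => ⟨P i, hlt i⟩) = f from
    funext fun i => (List.getD_eq_getElem _ _ (hlt i)).symm.trans (hf i)] at h

section oneLine

variable {n : ℕ} (w : Equiv.Perm (Fin n))

theorem length_oneLine : (oneLine w).length = n :=
  List.length_ofFn

theorem nodup_oneLine : (oneLine w).Nodup :=
  List.nodup_ofFn.2 (Fin.val_injective.comp w.injective)

theorem getD_oneLine {p : ℕ} (hp : p < n) : (oneLine w).getD p 0 = w ⟨p, hp⟩ := by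
  rw [List.getD_eq_getElem _ _ (by rwa [length_oneLine])]
  simp [oneLine]

variable {w}

theorem FullyCommutative.avoids321_oneLine (hw : FullyCommutative w) :
    Avoids321 (oneLine w) := by
  intro p q r hpq hqr hr
  rw [length_oneLine] at hr
  rw [getD_oneLine w hr, getD_oneLine w (hqr.trans hr),
    getD_oneLine w (hpq.trans (hqr.trans hr))]
  exact fun ⟨h₁, h₂⟩ => hw ⟨_, _, _, hpq, hqr, Fin.lt_def.2 h₁, Fin.lt_def.2 h₂⟩

end oneLine

theorem row_two_bumping_basics_general {n t : ℕ} (w : Equiv.Perm (Fin n))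
    (hw : FullyCommutative w) (z b : Fin t → ℕ) (hz : StrictMono z)
    (hb : ∀ i : Fin t, Bumps (oneLine w) (b i) (z i)) :
    (List.ofFn z).Sublist (oneLine w) ∧
    (∀ i j : Fin t, z i ≠ b j) ∧
    (StrictMono b ∧ (List.ofFn b).Sublist (oneLine w)) ∧
    (∀ i j : Fin t, i < j → ∀ k l : ℕ,
      BumpsAt (oneLine w) k (z i) → BumpsAt (oneLine w) l (z j) → k < l) := by
  have hl := nodup_oneLine w
  have h321 := hw.avoids321_oneLine
  have hd : ∀ i j : Fin t, i < j → ∀ k l : ℕ,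
      BumpsAt (oneLine w) k (z i) → BumpsAt (oneLine w) l (z j) → k < l :=
    fun i j hij _ _ hk hm => (hk.lt_iff_lt hl h321 hm).1 (hz hij)
  choose K hKb hK using hb
  choose P hPK hPz using fun i => (hK i).exists_lt_getD_eq
  have hKlen i : K i < (oneLine w).length := (hK i).1
  have hPlen i : P i < (oneLine w).length := (hPK i).trans (hKlen i)
  have hKmono : StrictMono K := fun i j hij => hd i j hij _ _ (hK i) (hK j)
  have hPmono : StrictMono P := fun i j hij =>
    (hK i).lt_of_getD_lt_getD h321 (hPz i) (hPK i) (by rw [hPz, hPz]; exact hz hij)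
  have hbmono : StrictMono b := fun i j hij =>
    hKb i ▸ hKb j ▸ (hK i).getD_lt_getD_of_lt hl h321 (hKmono hij) (hKlen j)
  have hzb : ∀ i j, z i ≠ b j := fun i j h => by
    have hij : i < j := hz.lt_iff_lt.1 (h ▸ hKb j ▸ (hK j).getD_lt)
    have hPK' : P i = K j := (List.getD_inj (hPlen i) (hKlen j) hl).1 (by rw [hPz, hKb, h])
    exact ((hPmono hij).trans (hPK j)).ne hPK'
  exact ⟨List.ofFn_sublist_of_strictMono hPmono hPlen hPz, hzb,
    ⟨hbmono, List.ofFn_sublist_of_strictMono hKmono hKlen hKb⟩, hd⟩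

/-- **Lemma.** Let `w` be fully commutative with `Row₂(P(w)) = {z₁ < ⋯ < z_t}`,
where `bᵢ` bumps `zᵢ` to the second row. Then: (a) `z₁⋯z_t` is an (increasing)
subsequence of `w`; (b) `{z₁,…,z_t}` and `{b₁,…,b_t}` are disjoint;
(c) `b₁⋯b_t` is an increasing subsequence of `w`; (d) for `i < j`, `zᵢ` is
bumped before `z_j`. -/
theorem row_two_bumping_basics {n t : ℕ} (w : Equiv.Perm (Fin n))
    (hw : FullyCommutative w) (z b : Fin t → ℕ) (hz : StrictMono z)
    (hzrow : Finset.image z Finset.univ = Row2 (RSKP w))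
    (hb : ∀ i : Fin t, Bumps (oneLine w) (b i) (z i)) :
    (List.ofFn z).Sublist (oneLine w) ∧
    (∀ i j : Fin t, z i ≠ b j) ∧
    (StrictMono b ∧ (List.ofFn b).Sublist (oneLine w)) ∧
    (∀ i j : Fin t, i < j → ∀ k l : ℕ,
      BumpsAt (oneLine w) k (z i) → BumpsAt (oneLine w) l (z j) → k < l) :=
  row_two_bumping_basics_general w hw z b hz hb
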